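/- Let S : ℤ → ℤ[x] be defined by S_{-1} = 0, S_0 = 1, S_{k+1} = x·S_k − S_{k-1}, and define σ_n ∈ ℤ[x] by σ_n = S_{n-1} if n > 0, σ_0 = 0, σ_n = −σ_{−n} if n < 0. Let P9 = −8 + 4x + 16x^2 − 10x^3 − 16x^4 + 4x^5 + 8x^6 + 2x^7 and R8 = 4 + 6x − 10x^2 − 14x^3 + 4x^4 + 8x^5 + 2x^6 in ℤ[x], and for integers p, q set Q(p,q) = −σ_p·σ_q·P9 + (σ_{p+1}·σ_{q+1} + σ_{p−1}·σ_{q−1})·R8 + 1. If p·q ≥ 0, then the degree of the polynomial Q(p,q) equals |p| + |q| + 6. -/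

import Mathlib

open Polynomial in
/-- \`P9 = Q(8_9) - 1 = -8 + 4x + 16x² - 10x³ - 16x⁴ + 4x⁵ + 8x⁶ + 2x⁷\`. -/
noncomputable def kanenobuP9 : Polynomial ℤ :=
  -8 + 4 * X + 16 * X ^ 2 - 10 * X ^ 3 - 16 * X ^ 4 + 4 * X ^ 5 + 8 * X ^ 6 + 2 * X ^ 7

open Polynomial in
/-- \`R8 = (Q(8_8) - 1)/x = 4 + 6x - 10x² - 14x³ + 4x⁴ + 8x⁵ + 2x⁶\`. -/
noncomputable def kanenobuR8 : Polynomial ℤ :=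
  4 + 6 * X - 10 * X ^ 2 - 14 * X ^ 3 + 4 * X ^ 4 + 8 * X ^ 5 + 2 * X ^ 6

/-!
The polynomials `S_k` are Mathlib's rescaled Chebyshev polynomials `Chebyshev.S ℤ k`, and the
identity `S_{-n-1} = -S_{n-1}` gives `σ_n = S_{n-1}` for every integer `n`. Hence `σ` is odd,
`Q(-p,-q) = Q(p,q)`, and `σ_n` has degree `|n| - 1` (monic for `n > 0`). For `p, q ≥ 0` the term
`σ_{p+1} σ_{q+1} R8` has degree `p + q + 6` and leading coefficient `2`, and every other term has
smaller degree, except for `p = q = 0`, where `Q = 2 R8 + 1`.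
-/

open Polynomial

namespace Polynomial.Chebyshev

variable (R : Type*) [CommRing R]

theorem eq_S_of_recurrence (f : ℤ → R[X]) (h_neg_one : f (-1) = 0) (h_zero : f 0 = 1)
    (h_rec : ∀ k : ℤ, 0 ≤ k → f (k + 1) = X * f k - f (k - 1)) (n : ℤ) (hn : -1 ≤ n) :
    f n = S R n := by
  have key : ∀ m : ℕ, f m = S R m ∧ f (m + 1) = S R (m + 1) := by
    intro m
    induction m with
    | zero => simpa [h_zero, h_neg_one] using h_rec 0 le_rfl
    | succ m ih =>
      refine ⟨by exact_mod_cast ih.2, ?_⟩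
      push_cast
      rw [h_rec _ (by positivity), S_add_one, add_sub_cancel_right, ih.1, ih.2]
  obtain ⟨m, rfl⟩ : ∃ m : ℕ, n = m - 1 := ⟨(n + 1).toNat, by omega⟩
  cases m with
  | zero => simpa using h_neg_one
  | succ m => simpa using (key m).1

variable [Nontrivial R]

theorem degree_S_natCast (n : ℕ) : (S R n).degree = n := by
  induction n using Nat.twoStepInduction with
  | zero => simp
  | one => simp
  | more n ih1 ih2 =>
    push_cast at ih2 ⊢
    have hX : (X * S R (n + 1)).degree = ↑(n + 2) := by
      rw [X_mul, degree_mul_X, ih2]; norm_cast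
    rw [S_add_two, degree_sub_eq_left_of_degree_lt]
    · exact hX
    · rw [ih1, hX]; norm_cast; omega

theorem natDegree_S_natCast (n : ℕ) : (S R n).natDegree = n :=
  natDegree_eq_of_degree_eq_some (degree_S_natCast R n)

theorem monic_S_natCast (n : ℕ) : (S R n).Monic := by
  induction n using Nat.twoStepInduction with
  | zero => simp
  | one => simp [monic_X]
  | more n ih1 ih2 =>
    push_cast at ih2 ⊢
    rw [S_add_two]
    refine (monic_X.mul ih2).sub_of_left ?_
    have h2 := degree_S_natCast R (n + 1)
    push_cast at h2
    rw [X_mul, degree_mul_X, h2, degree_S_natCast]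
    norm_cast; omega

theorem natDegree_S (n : ℤ) : (S R n).natDegree = (n + 1).natAbs - 1 := by
  obtain ⟨m, rfl | rfl⟩ := n.eq_nat_or_neg
  · rw [natDegree_S_natCast]; omega
  · rw [S_neg, natDegree_neg]
    obtain _ | _ | m := m
    · simp
    · simp
    · rw [show ((m + 2 : ℕ) : ℤ) - 2 = m by push_cast; ring, natDegree_S_natCast]; omega

end Polynomial.Chebyshev

open Chebyshev

noncomputable def kanenobuSigma (n : ℤ) : ℤ[X] := S ℤ (n - 1)

noncomputable def kanenobuQ (p q : ℤ) : ℤ[X] :=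
  -(kanenobuSigma p * kanenobuSigma q * kanenobuP9) +
    (kanenobuSigma (p + 1) * kanenobuSigma (q + 1) +
      kanenobuSigma (p - 1) * kanenobuSigma (q - 1)) * kanenobuR8 + 1

theorem eq_kanenobuSigma_of_recurrence (f σ : ℤ → ℤ[X])
    (hSm1 : f (-1) = 0) (hS0 : f 0 = 1)
    (hSrec : ∀ k : ℤ, 0 ≤ k → f (k + 1) = X * f k - f (k - 1))
    (hσpos : ∀ n : ℤ, 0 < n → σ n = f (n - 1)) (hσ0 : σ 0 = 0)
    (hσneg : ∀ n : ℤ, n < 0 → σ n = -σ (-n)) :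
    σ = kanenobuSigma := by
  have hS := eq_S_of_recurrence ℤ f hSm1 hS0 hSrec
  have hpos : ∀ n : ℤ, 0 < n → σ n = kanenobuSigma n := fun n hn => by
    rw [hσpos n hn, hS _ (by omega), kanenobuSigma]
  funext n
  rcases lt_trichotomy n 0 with hn | rfl | hn
  · rw [hσneg n hn, hpos (-n) (by omega), kanenobuSigma, kanenobuSigma, ← S_neg_sub_one]
    ring_nf
  · simp [hσ0, kanenobuSigma]
  · exact hpos n hn

theorem kanenobuSigma_neg (n : ℤ) : kanenobuSigma (-n) = -kanenobuSigma n := by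
  rw [kanenobuSigma, kanenobuSigma, ← S_neg_sub_one]

theorem natDegree_kanenobuSigma (n : ℤ) : (kanenobuSigma n).natDegree = n.natAbs - 1 := by
  rw [kanenobuSigma, natDegree_S, sub_add_cancel]

theorem natDegree_kanenobuSigma_mul_le (m n : ℤ) :
    (kanenobuSigma m * kanenobuSigma n).natDegree ≤ (m.natAbs - 1) + (n.natAbs - 1) :=
  natDegree_mul_le.trans_eq (by rw [natDegree_kanenobuSigma, natDegree_kanenobuSigma])

theorem kanenobuQ_neg_neg (p q : ℤ) : kanenobuQ (-p) (-q) = kanenobuQ p q := by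
  rw [kanenobuQ, kanenobuQ, show -p + 1 = -(p - 1) by ring, show -q + 1 = -(q - 1) by ring,
    show -p - 1 = -(p + 1) by ring, show -q - 1 = -(q + 1) by ring]
  simp only [kanenobuSigma_neg]
  ring

theorem natDegree_kanenobuP9_le : kanenobuP9.natDegree ≤ 7 := by
  unfold kanenobuP9; compute_degree

theorem natDegree_kanenobuR8 : kanenobuR8.natDegree = 6 := by
  unfold kanenobuR8; compute_degree!

theorem kanenobuR8_ne_zero : kanenobuR8 ≠ 0 :=
  ne_zero_of_natDegree_gt (n := 0) (by rw [natDegree_kanenobuR8]; norm_num)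

theorem natDegree_kanenobuQ_zero_zero : (kanenobuQ 0 0).natDegree = 6 := by
  have h : kanenobuQ 0 0 = 2 * kanenobuR8 + 1 := by
    rw [kanenobuQ]
    norm_num [kanenobuSigma]
  rw [h]; unfold kanenobuR8; compute_degree!

theorem natDegree_kanenobuQ_natCast_of_ne_zero (a b : ℕ) (hab : a ≠ 0 ∨ b ≠ 0) :
    (kanenobuQ a b).natDegree = a + b + 6 := by
  have hlead : (kanenobuSigma (a + 1) * kanenobuSigma (b + 1) * kanenobuR8).natDegree =
      a + b + 6 := by
    simp only [kanenobuSigma, add_sub_cancel_right]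
    rw [((monic_S_natCast ℤ a).mul (monic_S_natCast ℤ b)).natDegree_mul'
      kanenobuR8_ne_zero,
      (monic_S_natCast ℤ a).natDegree_mul (monic_S_natCast ℤ b),
      natDegree_S_natCast, natDegree_S_natCast, natDegree_kanenobuR8]
  have hP9 : (kanenobuSigma a * kanenobuSigma b * kanenobuP9).natDegree ≤ a + b + 5 := by
    rcases Nat.eq_zero_or_pos a with rfl | ha
    · simp [kanenobuSigma]
    rcases Nat.eq_zero_or_pos b with rfl | hb
    · simp [kanenobuSigma]
    have := natDegree_mul_le.trans
      (add_le_add (natDegree_kanenobuSigma_mul_le a b) natDegree_kanenobuP9_le)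
    omega
  have hR8 : (kanenobuSigma (a - 1) * kanenobuSigma (b - 1) * kanenobuR8).natDegree ≤
      a + b + 5 := by
    have := natDegree_mul_le.trans
      (add_le_add (natDegree_kanenobuSigma_mul_le (a - 1) (b - 1)) natDegree_kanenobuR8.le)
    omega
  have hrest : (-(kanenobuSigma a * kanenobuSigma b * kanenobuP9) +
      kanenobuSigma (a - 1) * kanenobuSigma (b - 1) * kanenobuR8 + 1).natDegree ≤ a + b + 5 := by
    refine natDegree_add_le_of_degree_le (natDegree_add_le_of_degree_le ?_ ?_) ?_
    · exact (natDegree_neg _).trans_le hP9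
    · exact hR8
    · rw [natDegree_one]; omega
  have hsplit : kanenobuQ a b = kanenobuSigma (a + 1) * kanenobuSigma (b + 1) * kanenobuR8 +
      (-(kanenobuSigma a * kanenobuSigma b * kanenobuP9) +
        kanenobuSigma (a - 1) * kanenobuSigma (b - 1) * kanenobuR8 + 1) := by
    rw [kanenobuQ]; ring
  rw [hsplit, natDegree_add_eq_left_of_natDegree_lt (by omega), hlead]

theorem natDegree_kanenobuQ_natCast (a b : ℕ) : (kanenobuQ a b).natDegree = a + b + 6 := by
  by_cases hab : a = 0 ∧ b = 0
  · obtain ⟨rfl, rfl⟩ := hab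
    exact natDegree_kanenobuQ_zero_zero
  · exact natDegree_kanenobuQ_natCast_of_ne_zero a b (by tauto)

theorem natDegree_kanenobuQ_of_mul_nonneg (p q : ℤ) (hpq : 0 ≤ p * q) :
    (kanenobuQ p q).natDegree = p.natAbs + q.natAbs + 6 := by
  rcases mul_nonneg_iff.mp hpq with ⟨hp, hq⟩ | ⟨hp, hq⟩
  · lift p to ℕ using hp
    lift q to ℕ using hq
    simpa using natDegree_kanenobuQ_natCast p q
  · obtain ⟨a, rfl⟩ : ∃ a : ℕ, p = -a := ⟨(-p).toNat, by omega⟩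
    obtain ⟨b, rfl⟩ : ∃ b : ℕ, q = -b := ⟨(-q).toNat, by omega⟩
    simpa [kanenobuQ_neg_neg] using natDegree_kanenobuQ_natCast a b

/-- If `p * q ≥ 0`, then the degree of Kanenobu's `Q` polynomial
`Q(p,q) = -σ_p σ_q P9 + (σ_{p+1} σ_{q+1} + σ_{p-1} σ_{q-1}) R8 + 1`
equals `|p| + |q| + 6`. -/
theorem kanenobu_Q_degree_of_nonneg (S σ : ℤ → Polynomial ℤ)
    (hSm1 : S (-1) = 0) (hS0 : S 0 = 1)
    (hSrec : ∀ k : ℤ, 0 ≤ k → S (k + 1) = Polynomial.X * S k - S (k - 1))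
    (hσpos : ∀ n : ℤ, 0 < n → σ n = S (n - 1)) (hσ0 : σ 0 = 0)
    (hσneg : ∀ n : ℤ, n < 0 → σ n = -σ (-n))
    (p q : ℤ) (hpq : 0 ≤ p * q) :
    (-(σ p * σ q * kanenobuP9) +
        (σ (p + 1) * σ (q + 1) + σ (p - 1) * σ (q - 1)) * kanenobuR8 + 1).natDegree =
      p.natAbs + q.natAbs + 6 := by
  obtain rfl := eq_kanenobuSigma_of_recurrence S σ hSm1 hS0 hSrec hσpos hσ0 hσneg
  exact natDegree_kanenobuQ_of_mul_nonneg p q hpq
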